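/- The set of coinvariants {x ∈ O_q(B⁺) : θ⁺(x) = 1 ⊗ x} equals the subalgebra O_q(N⁺) generated by the elements X_{ii}⁻¹X_{ij} (1 ≤ i < j ≤ n+1); likewise {x ∈ O_q(B⁻) : θ⁻(x) = 1 ⊗ x} equals the subalgebra O_q(N⁻) generated by the elements X_{jj}⁻¹X_{ji} (1 ≤ i < j ≤ n+1). -/

import Mathlib

open scoped TensorProduct

noncomputable section

namespace QSL

/-- The generator `X i j` of the free algebra underlying `O_q(SL_{n+1})`. -/
def Xf (k : Type) [Field k] (n : ℕ) (i j : Fin (n+1)) :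
    FreeAlgebra k (Fin (n+1) × Fin (n+1)) :=
  FreeAlgebra.ι k (i, j)

/-- The number of inversions (the length `ℓ(σ)`) of a permutation. -/
def invCount {m : ℕ} (σ : Equiv.Perm (Fin m)) : ℕ :=
  (Finset.univ.filter (fun p : Fin m × Fin m => p.1 < p.2 ∧ σ p.2 < σ p.1)).card

/-- The quantum determinant `∑_σ (-q)^{ℓ(σ)} X_{1σ(1)} ⋯ X_{n+1,σ(n+1)}`. -/
def qdet (k : Type) [Field k] (q : k) (n : ℕ) : FreeAlgebra k (Fin (n+1) × Fin (n+1)) :=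
  ∑ σ : Equiv.Perm (Fin (n+1)),
    ((-q) ^ invCount σ) • (List.ofFn fun i => Xf k n i (σ i)).prod

/-- Defining relations of `O_q(SL_{n+1})`. -/
inductive SLRel (k : Type) [Field k] (q : k) (n : ℕ) :
    FreeAlgebra k (Fin (n+1) × Fin (n+1)) → FreeAlgebra k (Fin (n+1) × Fin (n+1)) → Prop
  | row {i j m : Fin (n+1)} (h : j < m) :
      SLRel k q n (Xf k n i j * Xf k n i m) (q • (Xf k n i m * Xf k n i j))
  | col {i l j : Fin (n+1)} (h : i < l) :
      SLRel k q n (Xf k n i j * Xf k n l j) (q • (Xf k n l j * Xf k n i j))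
  | swap {i l j m : Fin (n+1)} (h1 : i < l) (h2 : m < j) :
      SLRel k q n (Xf k n i j * Xf k n l m) (Xf k n l m * Xf k n i j)
  | mixed {i l j m : Fin (n+1)} (h1 : i < l) (h2 : j < m) :
      SLRel k q n (Xf k n i j * Xf k n l m)
        (Xf k n l m * Xf k n i j + (q - q⁻¹) • (Xf k n i m * Xf k n l j))
  | det : SLRel k q n (qdet k q n) 1

/-- The quantized coordinate ring `O_q(SL_{n+1})`. -/
abbrev OqSL (k : Type) [Field k] (q : k) (n : ℕ) := RingQuot (SLRel k q n)

/-- The generator `X i j` of `O_q(SL_{n+1})`. -/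
def XSL (k : Type) [Field k] (q : k) (n : ℕ) (i j : Fin (n+1)) : OqSL k q n :=
  RingQuot.mkAlgHom k (SLRel k q n) (Xf k n i j)

/-- Relations `X i j = 0` for `i > j`, defining `O_q(B⁺)`. -/
inductive BpRel (k : Type) [Field k] (q : k) (n : ℕ) : OqSL k q n → OqSL k q n → Prop
  | zero {i j : Fin (n+1)} (h : j < i) : BpRel k q n (XSL k q n i j) 0

/-- Relations `X i j = 0` for `i < j`, defining `O_q(B⁻)`. -/
inductive BmRel (k : Type) [Field k] (q : k) (n : ℕ) : OqSL k q n → OqSL k q n → Prop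
  | zero {i j : Fin (n+1)} (h : i < j) : BmRel k q n (XSL k q n i j) 0

/-- Relations `X i j = 0` for `i ≠ j`, defining `O_q(T)`. -/
inductive TRel (k : Type) [Field k] (q : k) (n : ℕ) : OqSL k q n → OqSL k q n → Prop
  | zero {i j : Fin (n+1)} (h : i ≠ j) : TRel k q n (XSL k q n i j) 0

/-- The quantized coordinate ring `O_q(B⁺)` of the positive Borel. -/
abbrev OqBp (k : Type) [Field k] (q : k) (n : ℕ) := RingQuot (BpRel k q n)

/-- The quantized coordinate ring `O_q(B⁻)` of the negative Borel. -/
abbrev OqBm (k : Type) [Field k] (q : k) (n : ℕ) := RingQuot (BmRel k q n)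

/-- The quantized coordinate ring `O_q(T)` of the maximal torus. -/
abbrev OqT (k : Type) [Field k] (q : k) (n : ℕ) := RingQuot (TRel k q n)

/-- The coset of `X i j` in `O_q(B⁺)`. -/
def XBp (k : Type) [Field k] (q : k) (n : ℕ) (i j : Fin (n+1)) : OqBp k q n :=
  RingQuot.mkAlgHom k (BpRel k q n) (XSL k q n i j)

/-- The coset of `X i j` in `O_q(B⁻)`. -/
def XBm (k : Type) [Field k] (q : k) (n : ℕ) (i j : Fin (n+1)) : OqBm k q n :=
  RingQuot.mkAlgHom k (BmRel k q n) (XSL k q n i j)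

/-- The coset `Y i i` of `X i i` in `O_q(T)`. -/
def YT (k : Type) [Field k] (q : k) (n : ℕ) (i : Fin (n+1)) : OqT k q n :=
  RingQuot.mkAlgHom k (TRel k q n) (XSL k q n i i)

/-- `y i j = X_{ii}⁻¹ X_{ij}` in `O_q(B⁺)`. -/
def yY (k : Type) [Field k] (q : k) (n : ℕ) (i j : Fin (n+1)) : OqBp k q n :=
  Ring.inverse (XBp k q n i i) * XBp k q n i j

/-- `z i j = X_{ij} X_{jj}⁻¹` in `O_q(B⁺)`. -/
def zZ (k : Type) [Field k] (q : k) (n : ℕ) (i j : Fin (n+1)) : OqBp k q n :=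
  XBp k q n i j * Ring.inverse (XBp k q n j j)

/-- The subalgebra `O_q(N⁺)` of `O_q(B⁺)`, generated by the `X_{ii}⁻¹X_{ij}`, `i < j`. -/
def OqNp (k : Type) [Field k] (q : k) (n : ℕ) : Subalgebra k (OqBp k q n) :=
  Algebra.adjoin k {a | ∃ i j : Fin (n+1), i < j ∧ a = yY k q n i j}

/-- The subalgebra `O_q(N⁺)'` of `O_q(B⁺)`, generated by the `X_{ij}X_{jj}⁻¹`, `i < j`. -/
def OqNp' (k : Type) [Field k] (q : k) (n : ℕ) : Subalgebra k (OqBp k q n) :=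
  Algebra.adjoin k {a | ∃ i j : Fin (n+1), i < j ∧ a = zZ k q n i j}

/-- `X_{jj}⁻¹ X_{ji}` in `O_q(B⁻)` (for `i < j`). -/
def yNm (k : Type) [Field k] (q : k) (n : ℕ) (i j : Fin (n+1)) : OqBm k q n :=
  Ring.inverse (XBm k q n j j) * XBm k q n j i

/-- `X_{ji} X_{ii}⁻¹` in `O_q(B⁻)` (for `i < j`). -/
def zNm (k : Type) [Field k] (q : k) (n : ℕ) (i j : Fin (n+1)) : OqBm k q n :=
  XBm k q n j i * Ring.inverse (XBm k q n i i)

/-- The subalgebra `O_q(N⁻)` of `O_q(B⁻)`, generated by the `X_{jj}⁻¹X_{ji}`, `i < j`. -/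
def OqNm (k : Type) [Field k] (q : k) (n : ℕ) : Subalgebra k (OqBm k q n) :=
  Algebra.adjoin k {a | ∃ i j : Fin (n+1), i < j ∧ a = yNm k q n i j}

/-- The subalgebra `O_q(N⁻)'` of `O_q(B⁻)`, generated by the `X_{ji}X_{ii}⁻¹`, `i < j`. -/
def OqNm' (k : Type) [Field k] (q : k) (n : ℕ) : Subalgebra k (OqBm k q n) :=
  Algebra.adjoin k {a | ∃ i j : Fin (n+1), i < j ∧ a = zNm k q n i j}


/-!
The diagonal generators `X_ii` of `O_q(B^±)` commute and multiply to `1` (only the identity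
permutation survives in the quantum determinant of a triangular matrix), so they are units, and
they `q`-commute with the generators `X_aa⁻¹ X_ab` of `O_q(N^±)`. Hence `O_q(B^±)` is spanned
by the products `m X^L` with `m ∈ O_q(N^±)` and `X^L` a monomial in the `X_ii`, and
`θ(m X^L) = Y^L ⊗ m X^L`. Evaluating `O_q(T)` at diagonal matrices grades it by the character
lattice `ℤ^{n+1} / ℤ (1, …, 1)`. Taking the coefficient of the trivial character in the first
tensor factor fixes every coinvariant, and sends `m X^L` to `m` if `L` has weight zero (then
`X^L` is a power of `∏ X_ii = 1`) and to `0` otherwise; so it maps everything into `O_q(N^±)`.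
-/

section Permutations

variable {m : ℕ}

lemma exists_apply_lt_of_ne_one {σ : Equiv.Perm (Fin m)} (hσ : σ ≠ 1) : ∃ i, σ i < i := by
  by_contra! h
  have hsum : ∑ i : Fin m, (i : ℕ) = ∑ i, (σ i : ℕ) :=
    (Equiv.sum_comp σ fun i => (i : ℕ)).symm
  refine hσ <| Equiv.ext fun i => Fin.ext ?_
  exact ((Finset.sum_eq_sum_iff_of_le fun i _ => Fin.le_def.1 (h i)).1 hsum i
    (Finset.mem_univ i)).symm

lemma exists_lt_apply_of_ne_one {σ : Equiv.Perm (Fin m)} (hσ : σ ≠ 1) : ∃ i, i < σ i := by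
  obtain ⟨i, hi⟩ := exists_apply_lt_of_ne_one (inv_ne_one.2 hσ)
  exact ⟨σ⁻¹ i, by simpa using hi⟩

lemma invCount_one : invCount (1 : Equiv.Perm (Fin m)) = 0 := by
  rw [invCount, Finset.card_eq_zero, Finset.filter_eq_empty_iff]
  exact fun p _ h => lt_asymm h.1 h.2

end Permutations

section Monoid

variable {M : Type*} [Monoid M]

lemma isUnit_of_mem_of_isUnit_prod {L : List M} (hL : L.Pairwise Commute)
    (hprod : IsUnit L.prod) {a : M} (ha : a ∈ L) : IsUnit a := by
  induction L with
  | nil => simp at ha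
  | cons b L ih =>
    rw [List.pairwise_cons] at hL
    rw [List.prod_cons, (Commute.list_prod_right L b hL.1).isUnit_mul_iff] at hprod
    rcases List.mem_cons.1 ha with rfl | ha
    · exact hprod.1
    · exact ih hL.2 hprod.2 ha

lemma isUnit_of_prod_ofFn_eq_one {m : ℕ} {x : Fin m → M} (hcomm : ∀ i j, Commute (x i) (x j))
    (hprod : (List.ofFn x).prod = 1) (i : Fin m) : IsUnit (x i) :=
  isUnit_of_mem_of_isUnit_prod (List.pairwise_ofFn.2 fun i j _ => hcomm i j)
    (hprod ▸ isUnit_one) (List.mem_ofFn.2 ⟨i, rfl⟩)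

lemma prod_map_eq_one_of_count_eq {m : ℕ} {x : Fin m → M} (hcomm : ∀ i j, Commute (x i) (x j))
    (hprod : (List.ofFn x).prod = 1) {L : List (Fin m)} {c : ℕ} (hL : ∀ i, L.count i = c) :
    (L.map x).prod = 1 := by
  have hperm : L.Perm (List.replicate c (List.finRange m)).flatten := by
    refine List.perm_iff_count.2 fun i => ?_
    simp [List.count_flatten, hL, List.count_eq_one_of_mem (List.nodup_finRange m)]
  rw [(hperm.map x).prod_eq' (List.pairwise_map.2 (List.pairwise_of_forall hcomm)),
    List.map_flatten, List.prod_flatten, List.map_replicate, List.map_replicate,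
    ← List.ofFn_eq_map, hprod, List.prod_replicate, one_pow]

def leftNormalizer (s : Set M) : Submonoid M where
  carrier := {u | ∀ a ∈ s, ∃ b ∈ s, u * a = b * u}
  one_mem' a ha := ⟨a, ha, by rw [one_mul, mul_one]⟩
  mul_mem' {u v} hu hv a ha := by
    obtain ⟨b, hb, hab⟩ := hv a ha
    obtain ⟨c, hc, hbc⟩ := hu b hb
    exact ⟨c, hc, by rw [mul_assoc, hab, ← mul_assoc, hbc, mul_assoc]⟩

end Monoid

section Algebra

variable {R A ι : Type*} [CommSemiring R] [Semiring A] [Algebra R A]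

lemma mem_leftNormalizer_adjoin {s : Set A} {u : A}
    (hu : ∀ y ∈ s, ∃ c : R, u * y = c • (y * u)) :
    u ∈ leftNormalizer (Algebra.adjoin R s : Set A) := by
  intro a ha
  induction ha using Algebra.adjoin_induction with
  | mem y hy =>
    obtain ⟨c, hc⟩ := hu y hy
    exact ⟨c • y, Subalgebra.smul_mem _ (Algebra.subset_adjoin hy) c,
      by rw [hc, smul_mul_assoc]⟩
  | algebraMap r =>
    exact ⟨algebraMap R A r, Subalgebra.algebraMap_mem _ r, (Algebra.commutes r u).symm⟩
  | add y z _ _ hy hz =>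
    obtain ⟨b, hb, hb'⟩ := hy
    obtain ⟨c, hc, hc'⟩ := hz
    exact ⟨b + c, add_mem hb hc, by rw [mul_add, hb', hc', add_mul]⟩
  | mul y z _ _ hy hz =>
    obtain ⟨b, hb, hb'⟩ := hy
    obtain ⟨c, hc, hc'⟩ := hz
    exact ⟨b * c, mul_mem hb hc, by rw [← mul_assoc, hb', mul_assoc, hc', ← mul_assoc]⟩

def mulMonomials (N : Subalgebra R A) (x : ι → A) : Set A :=
  {a | ∃ b ∈ N, ∃ L : List ι, a = b * (L.map x).prod}

lemma mul_prod_mem_mulMonomials {N : Subalgebra R A} (x : ι → A) {b : A} (hb : b ∈ N)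
    (L : List ι) : b * (L.map x).prod ∈ mulMonomials N x :=
  ⟨b, hb, L, rfl⟩

/-- `mulMonomials N x` is a monoid, so its span is the subalgebra it generates. -/
lemma span_mulMonomials_eq_top {x : ι → A} {N : Subalgebra R A}
    (hx : ∀ i, x i ∈ leftNormalizer (N : Set A))
    (hgen : Algebra.adjoin R (mulMonomials N x) = ⊤) :
    Submodule.span R (mulMonomials N x) = ⊤ := by
  have hmul : ∀ a ∈ mulMonomials N x, ∀ a' ∈ mulMonomials N x,
      a * a' ∈ mulMonomials N x := by
    rintro _ ⟨b, hb, L, rfl⟩ _ ⟨b', hb', L', rfl⟩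
    obtain ⟨c, hc, hbc⟩ := list_prod_mem (S := leftNormalizer (N : Set A))
      (l := L.map x) (by simpa using fun i _ => hx i) b' hb'
    convert mul_prod_mem_mulMonomials x (mul_mem hb hc) (L ++ L') using 1
    rw [List.map_append, List.prod_append, mul_assoc, ← mul_assoc _ b', hbc]
    noncomm_ring
  let T : Submonoid A := ⟨⟨mulMonomials N x, fun ha hb => hmul _ ha _ hb⟩,
    by simpa using mul_prod_mem_mulMonomials x (one_mem N) []⟩
  calc Submodule.span R (mulMonomials N x)
      = Submodule.span R (Submonoid.closure (T : Set A) : Set A) := by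
        rw [Submonoid.closure_eq]; rfl
    _ = ⊤ := by rw [← Algebra.adjoin_eq_span]; exact hgen ▸ Algebra.top_toSubmodule

lemma eq_smul_inverse_mul_mul {u a : A} (hu : IsUnit u) {c : R} (h : u * a = c • (a * u)) :
    a = c • (Ring.inverse u * a * u) :=
  calc a = Ring.inverse u * (u * a) := by rw [← mul_assoc, Ring.inverse_mul_cancel _ hu, one_mul]
    _ = c • (Ring.inverse u * a * u) := by rw [h, mul_smul_comm, mul_assoc]

lemma mul_inverse_mul_eq_smul {u v a : A} (hv : IsUnit v) (huv : Commute u v) {c : R}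
    (h : u * a = c • (a * u)) : u * (Ring.inverse v * a) = c • (Ring.inverse v * a * u) := by
  have huv' : Commute u (Ring.inverse v) := by
    obtain ⟨w, rfl⟩ := hv
    exact Ring.inverse_unit w ▸ huv.units_inv_right
  rw [← mul_assoc, huv'.eq, mul_assoc, h, mul_smul_comm, mul_assoc]

end Algebra

section Relations

variable {k : Type} [Field k] {q : k} {n : ℕ} {A : Type*} [Semiring A] [Algebra k A]
  (π : OqSL k q n →ₐ[k] A)

lemma map_mkAlgHom_of_rel {a b : FreeAlgebra k (Fin (n+1) × Fin (n+1))} (h : SLRel k q n a b) :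
    π (RingQuot.mkAlgHom k (SLRel k q n) a) = π (RingQuot.mkAlgHom k (SLRel k q n) b) :=
  congrArg π (RingQuot.mkAlgHom_rel k h)

lemma map_XSL_row {i j m : Fin (n+1)} (h : j < m) :
    π (XSL k q n i j) * π (XSL k q n i m) = q • (π (XSL k q n i m) * π (XSL k q n i j)) := by
  simpa [XSL] using map_mkAlgHom_of_rel π (SLRel.row (i := i) h)

lemma map_XSL_col {i l j : Fin (n+1)} (h : i < l) :
    π (XSL k q n i j) * π (XSL k q n l j) = q • (π (XSL k q n l j) * π (XSL k q n i j)) := by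
  simpa [XSL] using map_mkAlgHom_of_rel π (SLRel.col (j := j) h)

lemma map_XSL_swap {i l j m : Fin (n+1)} (h1 : i < l) (h2 : m < j) :
    π (XSL k q n i j) * π (XSL k q n l m) = π (XSL k q n l m) * π (XSL k q n i j) := by
  simpa [XSL] using map_mkAlgHom_of_rel π (SLRel.swap h1 h2)

lemma map_XSL_mixed {i l j m : Fin (n+1)} (h1 : i < l) (h2 : j < m) :
    π (XSL k q n i j) * π (XSL k q n l m) = π (XSL k q n l m) * π (XSL k q n i j) +
      (q - q⁻¹) • (π (XSL k q n i m) * π (XSL k q n l j)) := by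
  simpa [XSL] using map_mkAlgHom_of_rel π (SLRel.mixed h1 h2)

lemma map_qdet : ∑ σ : Equiv.Perm (Fin (n+1)),
    (-q) ^ invCount σ • (List.ofFn fun i => π (XSL k q n i (σ i))).prod = 1 := by
  rw [← map_one π, ← map_one (RingQuot.mkAlgHom k (SLRel k q n)),
    ← map_mkAlgHom_of_rel π SLRel.det, qdet, map_sum, map_sum]
  refine Finset.sum_congr rfl fun σ _ => ?_
  rw [map_smul, map_smul, map_list_prod, map_list_prod, List.map_ofFn, List.map_ofFn]
  rfl

end Relations

section Triangular

variable {k : Type} [Field k] {q : k} {n : ℕ} {A : Type*} [Semiring A] [Algebra k A]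
  {π : OqSL k q n →ₐ[k] A}
  (htri : (∀ i j, j < i → π (XSL k q n i j) = 0) ∨ ∀ i j, i < j → π (XSL k q n i j) = 0)
include htri

lemma map_XSL_mul_map_XSL_eq_zero {i j : Fin (n+1)} (h : i < j) :
    π (XSL k q n i j) * π (XSL k q n j i) = 0 := by
  rcases htri with hl | hu
  · rw [hl j i h, mul_zero]
  · rw [hu i j h, zero_mul]

lemma commute_map_XSL_diag (i j : Fin (n+1)) :
    Commute (π (XSL k q n i i)) (π (XSL k q n j j)) := by
  have key {i j : Fin (n+1)} (h : i < j) : Commute (π (XSL k q n i i)) (π (XSL k q n j j)) :=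
    (by simpa [map_XSL_mul_map_XSL_eq_zero htri h] using map_XSL_mixed π h h :
      π (XSL k q n i i) * π (XSL k q n j j) = _)
  rcases lt_trichotomy i j with h | rfl | h
  · exact key h
  · exact Commute.refl _
  · exact (key h).symm

lemma prod_ofFn_map_XSL_diag : (List.ofFn fun i => π (XSL k q n i i)).prod = 1 := by
  have hdet := map_qdet π
  rw [Finset.sum_eq_single 1 ?vanish (by simp)] at hdet
  · simpa [invCount_one] using hdet
  intro σ _ hσ
  obtain ⟨i, hi⟩ : ∃ i, π (XSL k q n i (σ i)) = 0 := by
    rcases htri with hl | hu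
    · obtain ⟨i, hi⟩ := exists_apply_lt_of_ne_one hσ
      exact ⟨i, hl _ _ hi⟩
    · obtain ⟨i, hi⟩ := exists_lt_apply_of_ne_one hσ
      exact ⟨i, hu _ _ hi⟩
  rw [List.prod_eq_zero (List.mem_ofFn.2 ⟨i, hi⟩), smul_zero]

end Triangular

section DiagonalCommutation

variable {k : Type} [Field k] {q : k} {n : ℕ} {A : Type*} [Semiring A] [Algebra k A]
  {π : OqSL k q n →ₐ[k] A} (hq0 : q ≠ 0) (l : Fin (n+1)) {i j : Fin (n+1)} (hij : i < j)
include hq0 hij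

lemma map_XSL_diag_mul_of_upper (hπ : ∀ i j, j < i → π (XSL k q n i j) = 0) :
    π (XSL k q n l l) * π (XSL k q n i j) =
      (if l = i then q else if l = j then q⁻¹ else 1) •
        (π (XSL k q n i j) * π (XSL k q n l l)) := by
  rcases eq_or_ne l i with rfl | hli
  · rw [if_pos rfl]
    exact map_XSL_row π hij
  rcases eq_or_ne l j with rfl | hlj
  · rw [if_neg hli, if_pos rfl, map_XSL_col π hij, smul_smul, inv_mul_cancel₀ hq0, one_smul]
  rw [if_neg hli, if_neg hlj, one_smul]
  rcases lt_or_gt_of_ne hli with hl | hl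
  · simpa [hπ i l hl] using map_XSL_mixed π hl (hl.trans hij)
  rcases lt_or_gt_of_ne hlj with hl' | hl'
  · exact (map_XSL_swap π hl hl').symm
  · simpa [hπ l j hl'] using (map_XSL_mixed π hl hl').symm

lemma map_XSL_diag_mul_of_lower (hπ : ∀ i j, i < j → π (XSL k q n i j) = 0) :
    π (XSL k q n l l) * π (XSL k q n j i) =
      (if l = i then q else if l = j then q⁻¹ else 1) •
        (π (XSL k q n j i) * π (XSL k q n l l)) := by
  rcases eq_or_ne l i with rfl | hli
  · rw [if_pos rfl]
    exact map_XSL_col π hij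
  rcases eq_or_ne l j with rfl | hlj
  · rw [if_neg hli, if_pos rfl, map_XSL_row π hij, smul_smul, inv_mul_cancel₀ hq0, one_smul]
  rw [if_neg hli, if_neg hlj, one_smul]
  rcases lt_or_gt_of_ne hli with hl | hl
  · simpa [hπ l i hl] using map_XSL_mixed π (hl.trans hij) hl
  rcases lt_or_gt_of_ne hlj with hl' | hl'
  · exact map_XSL_swap π hl' hl
  · simpa [hπ j l hl'] using (map_XSL_mixed π hl' hl).symm

end DiagonalCommutation

section Torus

variable {k : Type} [Field k] {q : k} {n : ℕ} {R : Type*} [CommSemiring R] [Algebra k R]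

def diagEval (t : Fin (n+1) → R) : FreeAlgebra k (Fin (n+1) × Fin (n+1)) →ₐ[k] R :=
  FreeAlgebra.lift k fun p => if p.1 = p.2 then t p.1 else 0

lemma diagEval_Xf (t : Fin (n+1) → R) (i j : Fin (n+1)) :
    diagEval t (Xf k n i j) = if i = j then t i else 0 :=
  FreeAlgebra.lift_ι_apply _ _

lemma diagEval_Xf_mul_Xf_of_not_diag (t : Fin (n+1) → R) {i j l m : Fin (n+1)}
    (h : ¬(i = j ∧ l = m)) : diagEval t (Xf k n i j * Xf k n l m) = 0 := by
  rw [map_mul, diagEval_Xf, diagEval_Xf]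
  by_cases hij : i = j
  · rw [if_neg fun hlm => h ⟨hij, hlm⟩, mul_zero]
  · rw [if_neg hij, zero_mul]

lemma diagEval_qdet (t : Fin (n+1) → R) : diagEval t (qdet k q n) = ∏ i, t i := by
  rw [qdet, map_sum, Finset.sum_eq_single 1 ?vanish (by simp)]
  · simp [map_list_prod, List.map_ofFn, Function.comp_def, diagEval_Xf, invCount_one,
      List.prod_ofFn, Fin.prod_univ_succ]
  intro σ _ hσ
  obtain ⟨i, hi⟩ := exists_apply_lt_of_ne_one hσ
  rw [map_smul, map_list_prod, List.prod_eq_zero, smul_zero]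
  exact List.mem_map.2 ⟨_, List.mem_ofFn.2 ⟨i, rfl⟩, by rw [diagEval_Xf, if_neg hi.ne']⟩

lemma diagEval_rel {t : Fin (n+1) → R} (ht : ∏ i, t i = 1) ⦃a b : FreeAlgebra k _⦄
    (h : SLRel k q n a b) : diagEval t a = diagEval t b := by
  induction h with
  | row h | col h =>
    rw [map_smul, diagEval_Xf_mul_Xf_of_not_diag, diagEval_Xf_mul_Xf_of_not_diag, smul_zero] <;>
      rintro ⟨rfl, rfl⟩ <;> exact lt_irrefl _ h
  | swap => rw [map_mul, map_mul, mul_comm]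
  | @mixed i l j m h1 h2 =>
    rw [map_add, map_smul, diagEval_Xf_mul_Xf_of_not_diag t (i := i) (j := m), smul_zero,
      add_zero, map_mul, map_mul, mul_comm]
    rintro ⟨rfl, rfl⟩
    exact lt_asymm h1 h2
  | det => rw [diagEval_qdet, ht, map_one]

/-- The `R`-point `diag (t i)` of the torus, of determinant one. -/
def torusLift (t : Fin (n+1) → R) (ht : ∏ i, t i = 1) : OqT k q n →ₐ[k] R :=
  RingQuot.liftAlgHom k ⟨RingQuot.liftAlgHom k ⟨diagEval t, diagEval_rel ht⟩, by
    rintro _ _ ⟨hij⟩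
    rw [XSL, RingQuot.liftAlgHom_mkAlgHom_apply, diagEval_Xf, if_neg hij, map_zero]⟩

lemma torusLift_YT (t : Fin (n+1) → R) (ht : ∏ i, t i = 1) (i : Fin (n+1)) :
    torusLift (q := q) t ht (YT k q n i) = t i := by
  rw [torusLift, YT, XSL, RingQuot.liftAlgHom_mkAlgHom_apply, RingQuot.liftAlgHom_mkAlgHom_apply,
    diagEval_Xf, if_pos rfl]

end Torus

section Weights

variable {k : Type} [Field k] {q : k} {n : ℕ}

/-- The character lattice of the maximal torus of `SL_{n+1}`. -/
abbrev Weight (n : ℕ) := (Fin (n+1) → ℤ) ⧸ AddSubgroup.zmultiples (1 : Fin (n+1) → ℤ)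

def weight (L : List (Fin (n+1))) : Weight n :=
  QuotientAddGroup.mk fun i => (L.count i : ℤ)

lemma weight_cons (l : Fin (n+1)) (L : List (Fin (n+1))) :
    weight (l :: L) = weight [l] + weight L := by
  rw [weight, weight, weight, ← QuotientAddGroup.mk_add]
  congr 1
  ext i
  simp [List.count_cons, add_comm]

lemma sum_weight_singleton : ∑ i : Fin (n+1), weight [i] = 0 := by
  unfold weight
  rw [← QuotientAddGroup.mk_sum, QuotientAddGroup.eq_zero_iff]
  refine AddSubgroup.mem_zmultiples_iff.2 ⟨1, ?_⟩
  ext j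
  simp [List.count_singleton, Finset.sum_ite_eq']

lemma exists_count_eq_of_weight_eq_zero {L : List (Fin (n+1))} (h : weight L = 0) :
    ∃ c, ∀ i, L.count i = c := by
  obtain ⟨c, hc⟩ := AddSubgroup.mem_zmultiples_iff.1 ((QuotientAddGroup.eq_zero_iff _).1 h)
  exact ⟨L.count 0, fun i => by exact_mod_cast (congrFun hc i).symm.trans (congrFun hc 0)⟩

def weightHom : OqT k q n →ₐ[k] AddMonoidAlgebra k (Weight n) :=
  torusLift (fun i => AddMonoidAlgebra.single (weight [i]) 1) <| by
    rw [AddMonoidAlgebra.prod_single, sum_weight_singleton, Finset.prod_const_one]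
    rfl

lemma weightHom_prod_YT (L : List (Fin (n+1))) :
    weightHom ((L.map (YT k q n)).prod) = AddMonoidAlgebra.single (weight L) 1 := by
  induction L with
  | nil => simp [weight, AddMonoidAlgebra.one_def, ← Pi.zero_def]
  | cons l L ih =>
    rw [List.map_cons, List.prod_cons, map_mul, ih, weightHom, torusLift_YT,
      AddMonoidAlgebra.single_mul_single, one_mul, ← weight_cons]

def trivialWeightCoeff : OqT k q n →ₗ[k] k :=
  Finsupp.lapply 0 ∘ₗ (AddMonoidAlgebra.coeffLinearEquiv k).toLinearMap ∘ₗ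
    weightHom.toLinearMap

lemma trivialWeightCoeff_prod_YT (L : List (Fin (n+1))) :
    trivialWeightCoeff ((L.map (YT k q n)).prod) = if weight L = 0 then 1 else 0 := by
  simp [trivialWeightCoeff, weightHom_prod_YT, Finsupp.single_apply]

lemma trivialWeightCoeff_one : trivialWeightCoeff (1 : OqT k q n) = 1 := by
  simpa [weight, ← Pi.zero_def] using trivialWeightCoeff_prod_YT (q := q) ([] : List (Fin (n+1)))

end Weights

section Coinvariants

variable {k : Type} [Field k] {q : k} {n : ℕ} {A : Type*} [Semiring A] [Algebra k A]
  (θ : A →ₐ[k] OqT k q n ⊗[k] A)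

def trivialWeightPart : A →ₗ[k] A :=
  (TensorProduct.lid k A).toLinearMap ∘ₗ trivialWeightCoeff.rTensor A ∘ₗ θ.toLinearMap

lemma trivialWeightPart_of_eq_tmul {a : A} {t : OqT k q n} (h : θ a = t ⊗ₜ a) :
    trivialWeightPart θ a = trivialWeightCoeff t • a := by
  simp [trivialWeightPart, h]

lemma map_prod_map_eq_tmul {x : Fin (n+1) → A} (hx : ∀ l, θ (x l) = YT k q n l ⊗ₜ x l)
    (L : List (Fin (n+1))) : θ (L.map x).prod = (L.map (YT k q n)).prod ⊗ₜ (L.map x).prod := by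
  induction L with
  | nil => simp [Algebra.TensorProduct.one_def]
  | cons l L ih =>
    simp only [List.map_cons, List.prod_cons, map_mul, hx, ih, Algebra.TensorProduct.tmul_mul_tmul]

theorem equalizer_le_of_span_eq_top {x : Fin (n+1) → A} (hcomm : ∀ i j, Commute (x i) (x j))
    (hprod : (List.ofFn x).prod = 1) {N : Subalgebra k A}
    (hspan : Submodule.span k (mulMonomials N x) = ⊤)
    (hx : ∀ l, θ (x l) = YT k q n l ⊗ₜ x l)
    (hN : N ≤ θ.equalizer Algebra.TensorProduct.includeRight) :
    θ.equalizer Algebra.TensorProduct.includeRight ≤ N := by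
  have hpart : ∀ a, trivialWeightPart θ a ∈ N := by
    suffices h : Submodule.span k (mulMonomials N x) ≤
        (Subalgebra.toSubmodule N).comap (trivialWeightPart θ) from
      fun a => h (hspan ▸ Submodule.mem_top)
    rw [Submodule.span_le]
    rintro _ ⟨b, hb, L, rfl⟩
    have hθ : θ (b * (L.map x).prod) = (L.map (YT k q n)).prod ⊗ₜ (b * (L.map x).prod) := by
      rw [map_mul, hN hb, Algebra.TensorProduct.includeRight_apply, map_prod_map_eq_tmul θ hx,
        Algebra.TensorProduct.tmul_mul_tmul, one_mul]
    rw [SetLike.mem_coe, Submodule.mem_comap, trivialWeightPart_of_eq_tmul θ hθ,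
      trivialWeightCoeff_prod_YT]
    split_ifs with hL
    · obtain ⟨c, hc⟩ := exists_count_eq_of_weight_eq_zero hL
      rw [prod_map_eq_one_of_count_eq hcomm hprod hc, mul_one, one_smul]
      exact hb
    · rw [zero_smul]
      exact zero_mem _
  intro a ha
  have hθa : θ a = 1 ⊗ₜ a := (AlgHom.mem_equalizer _ _ a).1 ha
  simpa [trivialWeightPart_of_eq_tmul θ hθa, trivialWeightCoeff_one] using hpart a

end Coinvariants

section Borel

variable {k : Type} [Field k] {q : k} {n : ℕ} {A : Type*} [Semiring A] [Algebra k A]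
  (π : OqSL k q n →ₐ[k] A)

def unipotentGens (E : Fin (n+1) → Fin (n+1) → Prop) : Set A :=
  {y | ∃ a b, E a b ∧ y = Ring.inverse (π (XSL k q n a a)) * π (XSL k q n a b)}

lemma adjoin_range_map_XSL (hπ : Function.Surjective π) :
    Algebra.adjoin k (Set.range fun p : Fin (n+1) × Fin (n+1) => π (XSL k q n p.1 p.2)) = ⊤ :=
    by
  have hs : Function.Surjective (π.comp (RingQuot.mkAlgHom k (SLRel k q n))) :=
    hπ.comp (RingQuot.mkAlgHom_surjective k _)
  have h := Algebra.adjoin_image k (π.comp (RingQuot.mkAlgHom k (SLRel k q n)))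
    (Set.range (FreeAlgebra.ι k))
  rwa [FreeAlgebra.adjoin_range_ι, Algebra.map_top, (AlgHom.range_eq_top _).2 hs,
    ← Set.range_comp] at h

/-- `X_ab = c • (X_aa⁻¹ X_ab) X_aa` when `E a b`. -/
lemma adjoin_mulMonomials_eq_top (hπ : Function.Surjective π)
    (hunit : ∀ a, IsUnit (π (XSL k q n a a))) (E : Fin (n+1) → Fin (n+1) → Prop)
    (hE : ∀ a b, a ≠ b → ¬E a b → π (XSL k q n a b) = 0)
    (hskew : ∀ a b, E a b → ∃ c : k,
      π (XSL k q n a a) * π (XSL k q n a b) = c • (π (XSL k q n a b) * π (XSL k q n a a))) :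
    Algebra.adjoin k (mulMonomials (Algebra.adjoin k (unipotentGens π E))
      fun i => π (XSL k q n i i)) = ⊤ := by
  rw [eq_top_iff, ← adjoin_range_map_XSL π hπ]
  refine Algebra.adjoin_mono ?_
  rintro _ ⟨⟨a, b⟩, rfl⟩
  by_cases hab : a = b
  · subst hab
    simpa using mul_prod_mem_mulMonomials (fun i => π (XSL k q n i i)) (one_mem _) [a]
  by_cases hEab : E a b
  · obtain ⟨c, hc⟩ := hskew a b hEab
    have hgen : Ring.inverse (π (XSL k q n a a)) * π (XSL k q n a b) ∈ unipotentGens π E :=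
      ⟨a, b, hEab, rfl⟩
    convert mul_prod_mem_mulMonomials (fun i => π (XSL k q n i i))
      (Subalgebra.smul_mem _ (Algebra.subset_adjoin hgen) c) [a] using 1
    simpa [smul_mul_assoc] using eq_smul_inverse_mul_mul (hunit a) hc
  · simpa [hE a b hab hEab] using
      mul_prod_mem_mulMonomials (fun i => π (XSL k q n i i)) (zero_mem _) []

theorem equalizer_eq_adjoin_unipotentGens (hπ : Function.Surjective π)
    (htri : (∀ i j, j < i → π (XSL k q n i j) = 0) ∨
      ∀ i j, i < j → π (XSL k q n i j) = 0)
    (E : Fin (n+1) → Fin (n+1) → Prop)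
    (hE : ∀ a b, a ≠ b → ¬E a b → π (XSL k q n a b) = 0)
    (hskew : ∀ a b, E a b → ∀ l, ∃ c : k,
      π (XSL k q n l l) * π (XSL k q n a b) = c • (π (XSL k q n a b) * π (XSL k q n l l)))
    (θ : A →ₐ[k] OqT k q n ⊗[k] A)
    (hθ : ∀ a b, a = b ∨ E a b →
      θ (π (XSL k q n a b)) = YT k q n a ⊗ₜ π (XSL k q n a b)) :
    θ.equalizer Algebra.TensorProduct.includeRight = Algebra.adjoin k (unipotentGens π E) := by
  have hcomm := commute_map_XSL_diag htri
  have hprod := prod_ofFn_map_XSL_diag htri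
  have hunit := isUnit_of_prod_ofFn_eq_one hcomm hprod
  have hN : Algebra.adjoin k (unipotentGens π E) ≤
      θ.equalizer Algebra.TensorProduct.includeRight := by
    rw [Algebra.adjoin_le_iff]
    rintro _ ⟨a, b, hab, rfl⟩
    refine ((hunit a).map θ).mul_left_cancel ?_
    rw [← map_mul, ← mul_assoc, Ring.mul_inverse_cancel _ (hunit a), one_mul,
      hθ a b (Or.inr hab), hθ a a (Or.inl rfl), Algebra.TensorProduct.includeRight_apply,
      Algebra.TensorProduct.tmul_mul_tmul, mul_one, ← mul_assoc,
      Ring.mul_inverse_cancel _ (hunit a), one_mul]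
  have hnorm (l : Fin (n+1)) :
      π (XSL k q n l l) ∈ leftNormalizer (Algebra.adjoin k (unipotentGens π E) : Set A) := by
    refine mem_leftNormalizer_adjoin ?_
    rintro _ ⟨a, b, hab, rfl⟩
    obtain ⟨c, hc⟩ := hskew a b hab l
    exact ⟨c, mul_inverse_mul_eq_smul (hunit a) (hcomm l a) hc⟩
  have hspan := span_mulMonomials_eq_top hnorm
    (adjoin_mulMonomials_eq_top π hπ hunit E hE fun a b hab => hskew a b hab a)
  exact le_antisymm
    (equalizer_le_of_span_eq_top θ hcomm hprod hspan (fun l => hθ l l (Or.inl rfl)) hN) hN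

end Borel

end QSL

open QSL in
theorem theta_coinvariants_general (k : Type) [Field k] (q : k) (hq0 : q ≠ 0) (n : ℕ) :
    (∀ θp : OqBp k q n →ₐ[k] OqT k q n ⊗[k] OqBp k q n,
      (∀ i j : Fin (n+1), i ≤ j → θp (XBp k q n i j) = YT k q n i ⊗ₜ[k] XBp k q n i j) →
      {x : OqBp k q n | θp x = 1 ⊗ₜ[k] x} = (OqNp k q n : Set (OqBp k q n))) ∧
    (∀ θm : OqBm k q n →ₐ[k] OqT k q n ⊗[k] OqBm k q n,
      (∀ i j : Fin (n+1), j ≤ i → θm (XBm k q n i j) = YT k q n i ⊗ₜ[k] XBm k q n i j) →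
      {x : OqBm k q n | θm x = 1 ⊗ₜ[k] x} = (OqNm k q n : Set (OqBm k q n))) := by
  have hup (i j : Fin (n+1)) (h : j < i) : XBp k q n i j = 0 :=
    (RingQuot.mkAlgHom_rel k (BpRel.zero h)).trans (map_zero _)
  have hlow (i j : Fin (n+1)) (h : i < j) : XBm k q n i j = 0 :=
    (RingQuot.mkAlgHom_rel k (BmRel.zero h)).trans (map_zero _)
  refine ⟨fun θ hθ => ?_, fun θ hθ => ?_⟩
  · refine congrArg SetLike.coe <| equalizer_eq_adjoin_unipotentGens
      (RingQuot.mkAlgHom k (BpRel k q n)) (RingQuot.mkAlgHom_surjective k _) (Or.inl hup) (· < ·)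
      (fun a b hab hE => hup a b ((not_lt.1 hE).lt_of_ne hab.symm))
      (fun a b hab l => ⟨_, map_XSL_diag_mul_of_upper hq0 l hab hup⟩) θ fun a b h => ?_
    exact hθ a b (h.elim le_of_eq le_of_lt)
  · have hgens : unipotentGens (RingQuot.mkAlgHom k (BmRel k q n)) (fun a b => b < a) =
        {y | ∃ i j, i < j ∧ y = yNm k q n i j} := Set.ext fun _ => exists_comm
    have h := equalizer_eq_adjoin_unipotentGens
      (RingQuot.mkAlgHom k (BmRel k q n)) (RingQuot.mkAlgHom_surjective k _) (Or.inr hlow)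
      (fun a b => b < a) (fun a b hab hE => hlow a b ((not_lt.1 hE).lt_of_ne hab))
      (fun a b hab l => ⟨_, map_XSL_diag_mul_of_lower hq0 l hab hlow⟩) θ fun a b h => ?_
    · rw [hgens] at h
      exact congrArg SetLike.coe h
    exact hθ a b (h.elim ge_of_eq le_of_lt)

open QSL in
/-- The coinvariants of the left coactions `θ±` are exactly `O_q(N±)`. -/
theorem theta_coinvariants (k : Type) [Field k] (q : k) (hq0 : q ≠ 0)
    (hq : ∀ m : ℕ, 0 < m → q ^ m ≠ 1) (n : ℕ) (hn : 1 ≤ n) :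
    (∀ θp : OqBp k q n →ₐ[k] OqT k q n ⊗[k] OqBp k q n,
      (∀ i j : Fin (n+1), i ≤ j → θp (XBp k q n i j) = YT k q n i ⊗ₜ[k] XBp k q n i j) →
      {x : OqBp k q n | θp x = 1 ⊗ₜ[k] x} = (OqNp k q n : Set (OqBp k q n))) ∧
    (∀ θm : OqBm k q n →ₐ[k] OqT k q n ⊗[k] OqBm k q n,
      (∀ i j : Fin (n+1), j ≤ i → θm (XBm k q n i j) = YT k q n i ⊗ₜ[k] XBm k q n i j) →
      {x : OqBm k q n | θm x = 1 ⊗ₜ[k] x} = (OqNm k q n : Set (OqBm k q n))) :=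
  theta_coinvariants_general k q hq0 n
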